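/- The function G : {0,1}^ℕ_c → O(𝔹) mapping 0^ω to 𝔹 and every other computable binary sequence to 𝔹 \ {T} is K-computable, where T(n) is the halting time of φ_n(n) (0 if divergent). -/

import Mathlib

open Classical

/-- The standard enumeration of partial computable functions. -/
noncomputable def phi (e : ℕ) : ℕ →. ℕ := (Denumerable.ofNat Nat.Partrec.Code e).eval

/-- The halting-time function: `T n` is the halting time of `φ_n(n)` (measured by `evaln`),
and `0` if `φ_n(n)` diverges. -/
noncomputable def T : ℕ → ℕ := fun n =>
  if h : ∃ s, (Nat.Partrec.Code.evaln s (Denumerable.ofNat Nat.Partrec.Code n) n).isSome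
  then Nat.find h else 0

/-- The cylinder of elements of Baire space extending the finite sequence `u`. -/
def cylN (u : List ℕ) : Set (ℕ → ℕ) := {f | ∀ i : Fin u.length, f i.1 = u.get i}

/-- The finite prefix of length `m` of the oracle `f`. -/
def pref (f : ℕ → ℕ) (m : ℕ) : List ℕ := (List.range m).map f

/-- The finite prefix of length `m` of a boolean oracle. -/
def prefB (f : ℕ → Bool) (m : ℕ) : List Bool := (List.range m).map f

/-- `g` is a name of the open set `U ⊆ 𝔹` in the admissible representation of `O(𝔹)`:
`g` enumerates basic cylinders (`0` is padding, `encode u + 1` codes the cylinder `[u]`)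
exhausting `U`. -/
def OBName (g : ℕ → ℕ) (U : Set (ℕ → ℕ)) : Prop :=
  U = {f | ∃ (n : ℕ) (u : List ℕ), g n = Encodable.encode u + 1 ∧ f ∈ cylN u}

/-- `e` is a program (Markov-name) for the binary sequence `x`. -/
def computesSeq (e : ℕ) (x : ℕ → Bool) : Prop :=
  ∀ n, phi e n = Part.some (cond (x n) 1 0)

/-- Kolmogorov complexity of a computable binary sequence. -/
noncomputable def Kseq (x : ℕ → Bool) : ℕ := sInf (Nat.size '' {e | computesSeq e x})

/-!
A cylinder `[u]` is enumerated into `G x` once it is seen to avoid `T`, which is semidecidable,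
or once the input certifies `x = 0^ω` under the assumption `T ∈ [u]`. This is where `k ≥ K(x)`
enters: `x` is computed by one of the finitely many programs `e < 2 ^ k`, and the search for the
first `1` in the sequence computed by `e` is a diagonal computation `φ_j(j)`, so a candidate value
of `T j` tells whether that search halts and, if so, its result. If `x` is `0` at every position so
obtained, no short program computes `x` unless `x = 0^ω`. Hence for `x ≠ 0^ω` no cylinder
containing `T` is ever enumerated, while for `x = 0^ω` a long enough prefix of `T` is.
-/

open Nat.Partrec (Code)
open Nat.Partrec.Code

theorem prefB_length (x : ℕ → Bool) (m : ℕ) : (prefB x m).length = m := by simp [prefB]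

theorem prefB_take (x : ℕ → Bool) {t m : ℕ} (h : t ≤ m) : (prefB x m).take t = prefB x t := by
  rw [prefB, prefB, ← List.map_take, List.take_range, min_eq_left h]

theorem pref_length (f : ℕ → ℕ) (m : ℕ) : (pref f m).length = m := by simp [pref]

theorem mem_cylN_pref (f : ℕ → ℕ) (m : ℕ) : f ∈ cylN (pref f m) := by
  simp [cylN, pref]

theorem mem_cylN_iff {f : ℕ → ℕ} {u : List ℕ} : f ∈ cylN u ↔ ∀ i < u.length, f i = u.getD i 0 := by
  simp only [cylN, Fin.forall_iff, Set.mem_ofPred_eq, List.get_eq_getElem]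
  exact forall₂_congr fun i hi => by rw [List.getD_eq_getElem _ _ hi]

theorem exists_mem_cylN_not_mem {f g : ℕ → ℕ} (h : f ≠ g) : ∃ u, f ∈ cylN u ∧ g ∉ cylN u := by
  obtain ⟨i, hi⟩ := Function.ne_iff.1 h
  refine ⟨pref f (i + 1), mem_cylN_pref f (i + 1), fun hg => hi ?_⟩
  rw [mem_cylN_iff.1 hg i (by rw [pref_length]; omega),
    mem_cylN_iff.1 (mem_cylN_pref f (i + 1)) i (by rw [pref_length]; omega)]

theorem prefB_getD_true_eq_false_iff {x : ℕ → Bool} {s n : ℕ} :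
    (prefB x s).getD n true = false ↔ n < s ∧ x n = false := by
  by_cases h : n < s <;> simp [prefB, List.getD_eq_getElem?_getD, h]

section Dovetail

variable (Q : ℕ → List Bool → List ℕ → Prop)

/-- Entry `n = ⟪c, t⟫` of the output: `c + 1` if `Q` accepts the cylinder coded by `c` after
reading `t` input bits, and the padding `0` otherwise. -/
noncomputable def dovetail (k : ℕ) (l : List Bool) (n : ℕ) : ℕ :=
  if Q k (l.take n.unpair.2) (Denumerable.ofNat (List ℕ) n.unpair.1) then n.unpair.1 + 1 else 0

noncomputable def dovetailMachine (k : ℕ) (l : List Bool) : List ℕ :=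
  (List.range (l.length + 1)).map (dovetail Q k l)

variable {Q}

theorem dovetail_congr {k n : ℕ} {l l' : List Bool} (h : l.take n.unpair.2 = l'.take n.unpair.2) :
    dovetail Q k l n = dovetail Q k l' n := by
  rw [dovetail, dovetail, h]

theorem dovetailMachine_length (k : ℕ) (l : List Bool) :
    (dovetailMachine Q k l).length = l.length + 1 := by
  simp [dovetailMachine]

theorem dovetailMachine_isPrefix (k : ℕ) (l l' : List Bool) :
    dovetailMachine Q k l <+: dovetailMachine Q k (l ++ l') := by
  rw [List.prefix_iff_eq_take, dovetailMachine_length, dovetailMachine, dovetailMachine,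
    ← List.map_take, List.take_range, min_eq_left (by simp)]
  refine List.map_congr_left fun n hn => dovetail_congr ?_
  have : n.unpair.2 ≤ l.length :=
    (Nat.unpair_right_le n).trans (Nat.le_of_lt_succ (List.mem_range.1 hn))
  exact (List.take_append_of_le_length this).symm

theorem dovetailMachine_prefB (k : ℕ) (x : ℕ → Bool) (m : ℕ) :
    dovetailMachine Q k (prefB x m) = pref (fun n => dovetail Q k (prefB x n) n) (m + 1) := by
  rw [dovetailMachine, pref, prefB_length]
  refine List.map_congr_left fun n hn => dovetail_congr ?_
  have : n.unpair.2 ≤ n := Nat.unpair_right_le n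
  rw [prefB_take x (this.trans (Nat.le_of_lt_succ (List.mem_range.1 hn))), prefB_take x this]

theorem exists_dovetail_prefB_eq_iff {k : ℕ} {x : ℕ → Bool} {u : List ℕ} :
    (∃ n, dovetail Q k (prefB x n) n = Encodable.encode u + 1) ↔ ∃ s, Q k (prefB x s) u := by
  constructor
  · rintro ⟨n, hn⟩
    unfold dovetail at hn
    split_ifs at hn with hQ
    · rw [show n.unpair.1 = Encodable.encode u by omega, Denumerable.ofNat_encode,
        prefB_take x (Nat.unpair_right_le n)] at hQ
      exact ⟨_, hQ⟩
  · rintro ⟨s, hs⟩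
    refine ⟨Nat.pair (Encodable.encode u) s, ?_⟩
    rw [dovetail, Nat.unpair_pair, prefB_take x (Nat.right_le_pair _ _), Denumerable.ofNat_encode,
      if_pos hs]

theorem primrec_dovetailMachine
    (hQ : PrimrecPred fun p : ℕ × List Bool × List ℕ => Q p.1 p.2.1 p.2.2) :
    Primrec₂ (dovetailMachine Q) := by
  have hd : Primrec₂ fun (kl : ℕ × List Bool) n => dovetail Q kl.1 kl.2 n := by
    have hc : Primrec fun p : (ℕ × List Bool) × ℕ => p.2.unpair.1 :=
      Primrec.fst.comp (Primrec.unpair.comp Primrec.snd)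
    refine Primrec.ite (hQ.comp (Primrec.pair (Primrec.fst.comp Primrec.fst)
      (Primrec.pair (Primrec.list_take.comp (Primrec.snd.comp (Primrec.unpair.comp Primrec.snd))
        (Primrec.snd.comp Primrec.fst)) ((Primrec.ofNat _).comp hc))))
      (Primrec.succ.comp hc) (Primrec.const 0)
  exact Primrec.list_map
    (Primrec.list_range.comp (Primrec.succ.comp (Primrec.list_length.comp Primrec.snd))) hd
    |>.to₂

end Dovetail

def KComputable (G : (ℕ → Bool) → Set (ℕ → ℕ)) : Prop :=
  ∃ M : ℕ → List Bool → List ℕ, Computable₂ M ∧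
    (∀ k l l', M k l <+: M k (l ++ l')) ∧
    ∀ x : ℕ → Bool, Computable x → ∀ k, Kseq x ≤ k →
      ∃ g : ℕ → ℕ, OBName g (G x) ∧
        (∀ m, M k (prefB x m) = pref g (M k (prefB x m)).length) ∧
        (∀ n, ∃ m, n ≤ (M k (prefB x m)).length)

theorem kComputable_of_primrecPred {G : (ℕ → Bool) → Set (ℕ → ℕ)}
    {Q : ℕ → List Bool → List ℕ → Prop}
    (hQ : PrimrecPred fun p : ℕ × List Bool × List ℕ => Q p.1 p.2.1 p.2.2)
    (hG : ∀ x : ℕ → Bool, Computable x → ∀ k, Kseq x ≤ k →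
      G x = {f | ∃ u s, Q k (prefB x s) u ∧ f ∈ cylN u}) :
    KComputable G := by
  refine ⟨dovetailMachine Q, (primrec_dovetailMachine hQ).to_comp, dovetailMachine_isPrefix,
    fun x hx k hk => ⟨fun n => dovetail Q k (prefB x n) n, ?_, fun m => ?_, fun n => ⟨n, ?_⟩⟩⟩
  · rw [OBName, hG x hx k hk]
    ext f
    simp only [Set.mem_ofPred_eq]
    constructor
    · rintro ⟨u, s, hs, hf⟩
      obtain ⟨n, hn⟩ := exists_dovetail_prefB_eq_iff.2 ⟨s, hs⟩
      exact ⟨n, u, hn, hf⟩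
    · rintro ⟨n, u, hn, hf⟩
      obtain ⟨s, hs⟩ := exists_dovetail_prefB_eq_iff.1 ⟨n, hn⟩
      exact ⟨u, s, hs, hf⟩
  · rw [dovetailMachine_length, prefB_length, dovetailMachine_prefB]
  · rw [dovetailMachine_length, prefB_length]
    omega

section HaltingTime

open Primrec

-- reducible, so that `Nat.find` in `T` applies to it with the same decidability instance
abbrev HaltsWithin (s i : ℕ) : Prop := (evaln s (Denumerable.ofNat Code i) i).isSome

theorem haltsWithin_mono {s s' i : ℕ} (h : s ≤ s') (hs : HaltsWithin s i) : HaltsWithin s' i := by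
  obtain ⟨a, ha⟩ := Option.isSome_iff_exists.1 hs
  exact Option.isSome_iff_exists.2 ⟨a, evaln_mono h ha⟩

theorem not_haltsWithin_zero (i : ℕ) : ¬ HaltsWithin 0 i := by
  simp [HaltsWithin, evaln]

theorem primrecPred_haltsWithin : PrimrecPred fun p : ℕ × ℕ => HaltsWithin p.1 p.2 :=
  Primrec.eq.comp (option_isSome.comp (primrec_evaln.comp
    (pair (pair fst ((Primrec.ofNat Code).comp snd)) snd))) (const true)

theorem T_ne_zero_iff {i : ℕ} : T i ≠ 0 ↔ ∃ s, HaltsWithin s i := by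
  by_cases h : ∃ s, HaltsWithin s i
  · simp only [T, h, iff_true]
    intro h0
    exact not_haltsWithin_zero i (h0 ▸ Nat.find_spec h)
  · simp [T, h]

theorem T_eq_iff_of_ne_zero {i t : ℕ} (ht : t ≠ 0) :
    T i = t ↔ HaltsWithin t i ∧ ¬ HaltsWithin (t - 1) i := by
  by_cases h : ∃ s, HaltsWithin s i
  · simp only [T, h, dite_true, Nat.find_eq_iff]
    refine and_congr_right fun _ => ⟨fun hmin => hmin _ (by omega),
      fun hlast n hn hs => hlast (haltsWithin_mono (by omega) hs)⟩
  · simp only [T, h, dite_false]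
    exact ⟨fun h0 => absurd h0.symm ht, fun hs => absurd ⟨t, hs.1⟩ h⟩

theorem haltsWithin_T {i : ℕ} (h : T i ≠ 0) : HaltsWithin (T i) i :=
  ((T_eq_iff_of_ne_zero h).1 rfl).1

theorem exists_haltsWithin_iff_dom {i : ℕ} : (∃ s, HaltsWithin s i) ↔ (phi i i).Dom := by
  simp only [HaltsWithin, Option.isSome_iff_exists, Part.dom_iff_mem, phi]
  exact ⟨fun ⟨_, a, ha⟩ => ⟨a, evaln_sound ha⟩,
    fun ⟨a, ha⟩ => (evaln_complete.1 ha).imp fun _ hs => ⟨a, hs⟩⟩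

/-- Junk value `0` if `φ_i(i)` has not halted within `t` steps. -/
def diagValue (t i : ℕ) : ℕ := (evaln t (Denumerable.ofNat Code i) i).getD 0

theorem primrec_diagValue : Primrec₂ diagValue :=
  option_getD.comp (primrec_evaln.comp (pair (pair fst ((Primrec.ofNat Code).comp snd)) snd))
    (const 0)

theorem diagValue_T_mem {i : ℕ} (h : T i ≠ 0) : diagValue (T i) i ∈ phi i i := by
  obtain ⟨a, ha⟩ := Option.isSome_iff_exists.1 (haltsWithin_T h)
  rw [diagValue, ha]
  exact evaln_sound ha

def RefutesAt (s i t : ℕ) : Prop :=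
  t = 0 ∧ HaltsWithin s i ∨ t ≠ 0 ∧ ¬ (HaltsWithin t i ∧ ¬ HaltsWithin (t - 1) i)

theorem primrecPred_refutesAt : PrimrecPred fun p : ℕ × ℕ × ℕ => RefutesAt p.1 p.2.1 p.2.2 := by
  have ht0 : PrimrecPred fun p : ℕ × ℕ × ℕ => p.2.2 = 0 := Primrec.eq.comp (snd.comp snd) (const 0)
  have hhalt {f g : ℕ × ℕ × ℕ → ℕ} (hf : Primrec f) (hg : Primrec g) :
      PrimrecPred fun p => HaltsWithin (f p) (g p) :=
    primrecPred_haltsWithin.comp (pair hf hg)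
  exact (ht0.and (hhalt fst (fst.comp snd))).or (ht0.not.and (((hhalt (snd.comp snd)
    (fst.comp snd)).and (hhalt (nat_sub.comp (snd.comp snd) (const 1)) (fst.comp snd)).not).not))

theorem T_ne_iff_exists_refutesAt {i t : ℕ} : T i ≠ t ↔ ∃ s, RefutesAt s i t := by
  by_cases ht : t = 0
  · simp [RefutesAt, ht, T_ne_zero_iff]
  · simp [RefutesAt, ht, T_eq_iff_of_ne_zero ht]

def RefutesT (s : ℕ) (u : List ℕ) : Prop := ∃ i < u.length, RefutesAt s i (u.getD i 0)

theorem primrecPred_refutesT : PrimrecPred fun p : ℕ × List ℕ => RefutesT p.1 p.2 := by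
  have hR : PrimrecRel fun i (p : ℕ × List ℕ) => RefutesAt p.1 i (p.2.getD i 0) :=
    primrecPred_refutesAt.comp
      (pair (fst.comp snd) (pair fst ((list_getD 0).comp (snd.comp snd) fst)))
  exact (hR.exists_mem_list.comp (list_range.comp (list_length.comp snd)) Primrec.id).of_eq
    fun p => by simp [RefutesT]

theorem T_not_mem_cylN_iff {u : List ℕ} : T ∉ cylN u ↔ ∃ s, RefutesT s u := by
  simp only [mem_cylN_iff, not_forall, RefutesT, ← ne_eq, T_ne_iff_exists_refutesAt]
  exact ⟨fun ⟨i, hi, s, hs⟩ => ⟨s, i, hi, hs⟩, fun ⟨s, i, hi, hs⟩ => ⟨i, hi, s, hs⟩⟩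

end HaltingTime

noncomputable def firstOne (e : ℕ) : Part ℕ :=
  Nat.rfind fun n => (phi e n).map fun v => decide (v = 1)

theorem partrec_firstOne : Partrec firstOne := by
  have hphi : Partrec₂ phi :=
    eval_part.comp ((Computable.ofNat Code).comp Computable.fst) Computable.snd
  exact Partrec.rfind
    (hphi.map ((Primrec.eq.comp Primrec.snd (Primrec.const 1)).decide.to_comp.to₂))

theorem exists_code_firstOne : ∃ c : Code, ∀ e z, c.eval (Nat.pair e z) = firstOne e := by
  obtain ⟨c, hc⟩ := exists_code.1 (Partrec.nat_iff.1 (partrec_firstOne.comp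
    (Computable.fst.comp Computable.unpair)))
  exact ⟨c, fun e z => by simp [hc]⟩

noncomputable def firstOneIdx (e : ℕ) : ℕ :=
  Encodable.encode (exists_code_firstOne.choose.curry e)

theorem phi_firstOneIdx (e n : ℕ) : phi (firstOneIdx e) n = firstOne e := by
  rw [phi, firstOneIdx, Denumerable.ofNat_encode, eval_curry, exists_code_firstOne.choose_spec]

theorem primrec_firstOneIdx : Primrec firstOneIdx :=
  Primrec.encode.comp (primrec₂_curry.comp (Primrec.const _) Primrec.id)

theorem firstOne_eq_some_find {e : ℕ} {x : ℕ → Bool} (hc : computesSeq e x) (hx : ∃ n, x n = true) :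
    firstOne e = Part.some (Nat.find hx) := by
  have hmap (n : ℕ) : ((phi e n).map fun v => decide (v = 1)) = Part.some (x n) := by
    rw [hc n]
    cases x n <;> simp
  refine Part.eq_some_iff.2 (Nat.mem_rfind.2 ⟨?_, fun hm => ?_⟩)
  · simp [hmap, Nat.find_spec hx]
  · simpa [hmap] using Nat.find_min hx hm

theorem exists_lt_two_pow_computesSeq {x : ℕ → Bool} (hx : Computable x) {k : ℕ} (hk : Kseq x ≤ k) :
    ∃ e < 2 ^ k, computesSeq e x := by
  obtain ⟨c, hc⟩ := exists_code.1 (Partrec.nat_iff.1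
    (Computable.cond hx (Computable.const 1) (Computable.const 0) :
      Computable fun n => cond (x n) 1 0))
  have hne : (Nat.size '' {e | computesSeq e x}).Nonempty :=
    ⟨_, Encodable.encode c, fun n => by rw [phi, Denumerable.ofNat_encode, hc]; rfl, rfl⟩
  obtain ⟨e, he, hsize⟩ := Nat.sInf_mem hne
  exact ⟨e, Nat.size_le.1 (hsize ▸ hk), he⟩

theorem exists_forall_lt_bound (f : ℕ → ℕ) (n : ℕ) : ∃ N, ∀ e < n, f e < N :=
  ⟨(Finset.range n).sup f + 1,
    fun _ he => Nat.lt_succ_of_le (Finset.le_sup (Finset.mem_range.2 he))⟩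

section Certificate

open Primrec

def ZeroAtClaimedValue (l : List Bool) (u : List ℕ) (j : ℕ) : Prop :=
  j < u.length ∧ (u.getD j 0 = 0 ∨ l.getD (diagValue (u.getD j 0) j) true = false)

/-- If `T ∈ [u]`, then `u` reveals which programs `e < 2 ^ k` compute a sequence containing a `1`,
and where its first `1` is; `l` vanishing at all these positions rules out every such program. -/
def CertifiesZero (k : ℕ) (l : List Bool) (u : List ℕ) : Prop :=
  ∀ e < 2 ^ k, ZeroAtClaimedValue l u (firstOneIdx e)

theorem primrecPred_certifiesZero :
    PrimrecPred fun p : ℕ × List Bool × List ℕ => CertifiesZero p.1 p.2.1 p.2.2 := by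
  have hR : PrimrecRel fun e (p : ℕ × List Bool × List ℕ) =>
      ZeroAtClaimedValue p.2.1 p.2.2 (firstOneIdx e) := by
    have hj : Primrec fun q : ℕ × ℕ × List Bool × List ℕ => firstOneIdx q.1 :=
      primrec_firstOneIdx.comp fst
    have hu : Primrec fun q : ℕ × ℕ × List Bool × List ℕ => q.2.2.2 := snd.comp (snd.comp snd)
    have huj : Primrec fun q : ℕ × ℕ × List Bool × List ℕ => q.2.2.2.getD (firstOneIdx q.1) 0 :=
      (list_getD 0).comp hu hj
    exact (nat_lt.comp hj (list_length.comp hu)).and ((Primrec.eq.comp huj (const 0)).or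
      (Primrec.eq.comp ((list_getD true).comp (fst.comp (snd.comp snd))
        (primrec_diagValue.comp huj hj)) (const false)))
  exact (hR.forall_mem_list.comp (list_range.comp
    ((Primrec₂.unpaired'.1 Nat.Primrec.pow).comp (const 2) fst)) Primrec.id).of_eq
    fun p => by simp [CertifiesZero]

theorem not_certifiesZero {x : ℕ → Bool} {e k s : ℕ} {u : List ℕ} (he : e < 2 ^ k)
    (hc : computesSeq e x) (hx : ∃ n, x n = true) (hT : T ∈ cylN u) :
    ¬ CertifiesZero k (prefB x s) u := by
  intro hcert
  obtain ⟨hj, hzero⟩ := hcert e he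
  set j := firstOneIdx e
  have hphi : phi j j = Part.some (Nat.find hx) := by
    rw [phi_firstOneIdx, firstOne_eq_some_find hc hx]
  have hTj : T j ≠ 0 := T_ne_zero_iff.2 (exists_haltsWithin_iff_dom.2 (by rw [hphi]; trivial))
  have huj : u.getD j 0 = T j := ((mem_cylN_iff.1 hT) j hj).symm
  have hval : diagValue (T j) j = Nat.find hx := Part.mem_some_iff.1 (hphi ▸ diagValue_T_mem hTj)
  rw [huj, hval, prefB_getD_true_eq_false_iff] at hzero
  rcases hzero with h0 | ⟨-, hfalse⟩
  · exact hTj h0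
  · simp [Nat.find_spec hx] at hfalse

theorem exists_certifiesZero (k : ℕ) :
    ∃ u s, T ∈ cylN u ∧ CertifiesZero k (prefB (fun _ => false) s) u := by
  obtain ⟨J, hJ⟩ := exists_forall_lt_bound firstOneIdx (2 ^ k)
  obtain ⟨s, hs⟩ := exists_forall_lt_bound
    (fun e => diagValue ((pref T J).getD (firstOneIdx e) 0) (firstOneIdx e)) (2 ^ k)
  refine ⟨pref T J, s, mem_cylN_pref T J, fun e he => ⟨?_, Or.inr ?_⟩⟩
  · rw [pref_length]
    exact hJ e he
  · exact prefB_getD_true_eq_false_iff.2 ⟨hs e he, rfl⟩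

end Certificate

/-- The length of the input read so far also serves as the number of steps granted to the search
for a disagreement with `T`. -/
def Accepts (k : ℕ) (l : List Bool) (u : List ℕ) : Prop :=
  RefutesT l.length u ∨ CertifiesZero k l u

theorem primrecPred_accepts :
    PrimrecPred fun p : ℕ × List Bool × List ℕ => Accepts p.1 p.2.1 p.2.2 :=
  (primrecPred_refutesT.comp (Primrec.pair
    (Primrec.list_length.comp (Primrec.fst.comp Primrec.snd)) (Primrec.snd.comp Primrec.snd))).or
    primrecPred_certifiesZero

theorem exists_accepts_of_ne_T {f : ℕ → ℕ} (hf : f ≠ T) (k : ℕ) (x : ℕ → Bool) :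
    ∃ u s, Accepts k (prefB x s) u ∧ f ∈ cylN u := by
  obtain ⟨u, hfu, hTu⟩ := exists_mem_cylN_not_mem hf
  obtain ⟨s, hs⟩ := T_not_mem_cylN_iff.1 hTu
  exact ⟨u, s, Or.inl ((prefB_length x s).symm ▸ hs), hfu⟩

theorem not_exists_accepts_T {x : ℕ → Bool} (hx : Computable x) (hx0 : x ≠ fun _ => false)
    {k : ℕ} (hk : Kseq x ≤ k) : ¬ ∃ u s, Accepts k (prefB x s) u ∧ T ∈ cylN u := by
  rintro ⟨u, s, hacc | hcert, hT⟩
  · exact T_not_mem_cylN_iff.2 ⟨_, hacc⟩ hT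
  · obtain ⟨e, he, hc⟩ := exists_lt_two_pow_computesSeq hx hk
    obtain ⟨n, hn⟩ := Function.ne_iff.1 hx0
    exact not_certifiesZero he hc ⟨n, by simpa using hn⟩ hT hcert

theorem setOf_accepts_eq {x : ℕ → Bool} (hx : Computable x) {k : ℕ} (hk : Kseq x ≤ k) :
    {f | ∃ u s, Accepts k (prefB x s) u ∧ f ∈ cylN u} =
      if x = (fun _ => false) then Set.univ else {T}ᶜ := by
  split_ifs with hx0
  · refine Set.eq_univ_of_forall fun f => ?_
    by_cases hf : f = T
    · obtain ⟨u, s, hT, hcert⟩ := exists_certifiesZero k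
      exact hf ▸ ⟨u, s, Or.inr (hx0 ▸ hcert), hT⟩
    · exact exists_accepts_of_ne_T hf k x
  · ext f
    refine ⟨?_, fun hf => exists_accepts_of_ne_T hf k x⟩
    rintro hf rfl
    exact not_exists_accepts_T hx hx0 hk hf

/-- The function `G : {0,1}^ℕ_c → O(𝔹)` mapping `0^ω` to `𝔹` and every other computable
binary sequence to `𝔹 \ {T}` is K-computable: a computable monotone functional maps
(`k ≥ K(x)`, a Type-2 name of `x`) to a name of `G(x)`. -/
theorem stmt17 :
    ∃ G : (ℕ → Bool) → Set (ℕ → ℕ),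
      G (fun _ => false) = Set.univ ∧
      (∀ x : ℕ → Bool, x ≠ (fun _ => false) → G x = {T}ᶜ) ∧
      ∃ M : ℕ → List Bool → List ℕ, Computable₂ M ∧
        (∀ k l l', M k l <+: M k (l ++ l')) ∧
        ∀ x : ℕ → Bool, Computable x → ∀ k, Kseq x ≤ k →
          ∃ g : ℕ → ℕ, OBName g (G x) ∧
            (∀ m, M k (prefB x m) = pref g (M k (prefB x m)).length) ∧
            (∀ n, ∃ m, n ≤ (M k (prefB x m)).length) :=
  ⟨fun x => if x = (fun _ => false) then Set.univ else {T}ᶜ, if_pos rfl, fun _ hx => if_neg hx,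
    kComputable_of_primrecPred primrecPred_accepts fun _ hx _ hk => (setOf_accepts_eq hx hk).symm⟩
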